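/- Let B ∈ ℝ^{m×n} be a NAE3SAT clause matrix. Then lindisc(A) ≤ 4/3 if there exists a NAE-satisfying assignment for B, and lindisc(A) ≥ 3/2 if there is no NAE-satisfying assignment for B, where A ∈ ℝ^{(m+3n)×3n} is the block matrix whose blocks, from top to bottom, are [⅓B ⅓B ⅓B], [I_n I_n −I_n], [I_n −I_n I_n], and [−I_n I_n I_n]. In particular, A witnesses a multiplicative gap of (3/2)/(4/3) = 9/8 between the two cases. -/

import Mathlib

/-- The block matrix `A` with row blocks `[⅓B ⅓B ⅓B]`, `[I I -I]`, `[I -I I]`, `[-I I I]`. -/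
noncomputable def Amat {m n : ℕ} (B : Matrix (Fin m) (Fin n) ℝ) :
    Matrix (Fin m ⊕ (Fin n ⊕ Fin n ⊕ Fin n)) (Fin n ⊕ Fin n ⊕ Fin n) ℝ :=
  Matrix.of fun r c =>
    match r with
    | Sum.inl j => (1 / 3) * B j (Sum.elim id (Sum.elim id id) c)
    | Sum.inr (Sum.inl k) =>
        Sum.elim (fun i => if k = i then (1 : ℝ) else 0)
          (Sum.elim (fun i => if k = i then (1 : ℝ) else 0)
            (fun i => if k = i then (-1 : ℝ) else 0)) c
    | Sum.inr (Sum.inr (Sum.inl k)) =>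
        Sum.elim (fun i => if k = i then (1 : ℝ) else 0)
          (Sum.elim (fun i => if k = i then (-1 : ℝ) else 0)
            (fun i => if k = i then (1 : ℝ) else 0)) c
    | Sum.inr (Sum.inr (Sum.inr k)) =>
        Sum.elim (fun i => if k = i then (-1 : ℝ) else 0)
          (Sum.elim (fun i => if k = i then (1 : ℝ) else 0)
            (fun i => if k = i then (1 : ℝ) else 0)) c

/-- `B` is a NAE3SAT clause matrix: each row is `b₁e^{i₁} + b₂e^{i₂} + b₃e^{i₃}`
with signs `b₁,b₂,b₃ ∈ {-1,1}`. -/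
def IsNAEClauseMatrix {m n : ℕ} (B : Matrix (Fin m) (Fin n) ℝ) : Prop :=
  ∃ (i1 i2 i3 : Fin m → Fin n) (b1 b2 b3 : Fin m → ℝ),
    (∀ j, (b1 j = -1 ∨ b1 j = 1) ∧ (b2 j = -1 ∨ b2 j = 1) ∧ (b3 j = -1 ∨ b3 j = 1)) ∧
    (∀ j i, B j i = (if i1 j = i then b1 j else 0) + (if i2 j = i then b2 j else 0) +
      (if i3 j = i then b3 j else 0))

/-- `ψ ∈ {0,1}ⁿ` NAE-satisfies `B` if `‖B((1/2)·1 - ψ)‖_∞ ≤ 1/2`. -/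
def NAESatisfies {m n : ℕ} (B : Matrix (Fin m) (Fin n) ℝ) (ψ : Fin n → ℝ) : Prop :=
  (∀ i, ψ i = 0 ∨ ψ i = 1) ∧ ‖B.mulVec ((fun _ => (1 : ℝ) / 2) - ψ)‖ ≤ 1 / 2

/-- The linear discrepancy of a matrix. -/
noncomputable def lindisc {I J : Type*} [Fintype I] [Fintype J] (A : Matrix I J ℝ) : ℝ :=
  ⨆ w : {w : J → ℝ // ∀ j, w j ∈ Set.Icc (0 : ℝ) 1},
    ⨅ x : {x : J → ℝ // ∀ j, x j = 0 ∨ x j = 1}, ‖A.mulVec (w.1 - x.1)‖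

/-!
A fractional point `w` is rounded one variable at a time. For variable `i` the three copies
`w (inl i)`, `w (inr (inl i))`, `w (inr (inr i))` are rounded so that the three gadget rows stay
within `4/3` and the total rounding error `Dᵢ` of the copies has the sign of `-tᵢ`, where
`t = ½ - ψ ∈ {±½}ⁿ` comes from an NAE-satisfying assignment `ψ`. A clause row is
`⅓ ∑ₖ bₖ D_{iₖ}`; since the signs `bₖ t_{iₖ}` are not all equal, at most two of its terms have the
same sign, bounding it by `⅓ · 2 · 2 = 4/3`.

Conversely, at `w = ½` every rounding error is `±½`. If the copies of some variable disagree, a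
gadget row equals `±3/2`; otherwise the error is `(t, t, t)` for an assignment `ψ = ½ - t`, the
clause rows read `B t`, and an unsatisfied clause gives `|(B t)ⱼ| = 3/2`.
-/

open Matrix Set Sum

section Lindisc

variable {I J : Type*} [Fintype I] [Fintype J] {A : Matrix I J ℝ} {c : ℝ}

lemma lindisc_le_of_forall_exists
    (h : ∀ w : J → ℝ, (∀ j, w j ∈ Icc 0 1) →
      ∃ x : J → ℝ, (∀ j, x j = 0 ∨ x j = 1) ∧ ‖A *ᵥ (w - x)‖ ≤ c) :
    lindisc A ≤ c := by
  have : Nonempty {w : J → ℝ // ∀ j, w j ∈ Icc (0 : ℝ) 1} :=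
    ⟨⟨0, fun _ => ⟨le_rfl, zero_le_one⟩⟩⟩
  refine ciSup_le fun w => ?_
  obtain ⟨x, hx, hle⟩ := h w.1 w.2
  exact ciInf_le_of_le ⟨0, by rintro _ ⟨y, rfl⟩; exact norm_nonneg _⟩ ⟨x, hx⟩ hle

lemma le_lindisc_of_forall_le {w : J → ℝ} (hw : ∀ j, w j ∈ Icc 0 1)
    (h : ∀ x : J → ℝ, (∀ j, x j = 0 ∨ x j = 1) → c ≤ ‖A *ᵥ (w - x)‖) :
    c ≤ lindisc A := by
  let _ := Matrix.linftyOpNormedAddCommGroup (m := I) (n := J) (α := ℝ)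
  have : Nonempty {x : J → ℝ // ∀ j, x j = 0 ∨ x j = 1} := ⟨⟨0, fun _ => Or.inl rfl⟩⟩
  have hbdd : BddAbove (range fun v : {v : J → ℝ // ∀ j, v j ∈ Icc (0 : ℝ) 1} =>
      ⨅ x : {x : J → ℝ // ∀ j, x j = 0 ∨ x j = 1}, ‖A *ᵥ (v.1 - x.1)‖) := by
    refine ⟨‖A‖, ?_⟩
    rintro _ ⟨v, rfl⟩
    have hv : ‖v.1‖ ≤ 1 := (pi_norm_le_iff_of_nonneg zero_le_one).2 fun j => by
      rw [Real.norm_eq_abs, abs_le]; exact ⟨by linarith [(v.2 j).1], (v.2 j).2⟩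
    refine ciInf_le_of_le ⟨0, by rintro _ ⟨y, rfl⟩; exact norm_nonneg _⟩
      ⟨0, fun _ => Or.inl rfl⟩ ?_
    calc ‖A *ᵥ (v.1 - 0)‖ ≤ ‖A‖ * ‖v.1‖ := by rw [sub_zero]; exact linfty_opNorm_mulVec A v.1
      _ ≤ ‖A‖ := mul_le_of_le_one_right (norm_nonneg A) hv
  exact le_ciSup_of_le hbdd ⟨w, hw⟩ (le_ciInf fun x => h x.1 x.2)

end Lindisc

section Rounding

def HasGoodRounding (t w₁ w₂ w₃ : ℝ) : Prop :=
  ∃ x₁ x₂ x₃ : ℝ, (x₁ = 0 ∨ x₁ = 1) ∧ (x₂ = 0 ∨ x₂ = 1) ∧ (x₃ = 0 ∨ x₃ = 1) ∧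
    |(w₁ - x₁) + (w₂ - x₂) - (w₃ - x₃)| ≤ 4 / 3 ∧
    |(w₁ - x₁) - (w₂ - x₂) + (w₃ - x₃)| ≤ 4 / 3 ∧
    |-(w₁ - x₁) + (w₂ - x₂) + (w₃ - x₃)| ≤ 4 / 3 ∧
    t * ((w₁ - x₁) + (w₂ - x₂) + (w₃ - x₃)) ∈ Icc (-1) 0

variable {t w₁ w₂ w₃ : ℝ}

lemma HasGoodRounding.swap₁₂ (h : HasGoodRounding t w₁ w₂ w₃) : HasGoodRounding t w₂ w₁ w₃ := by
  obtain ⟨x₁, x₂, x₃, hx₁, hx₂, hx₃, r₁, r₂, r₃, hs⟩ := h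
  refine ⟨x₂, x₁, x₃, hx₂, hx₁, hx₃, ?_, ?_, ?_, ?_⟩
  · convert r₁ using 2; ring
  · convert r₃ using 2; ring
  · convert r₂ using 2; ring
  · convert hs using 2; ring

lemma HasGoodRounding.swap₂₃ (h : HasGoodRounding t w₁ w₂ w₃) : HasGoodRounding t w₁ w₃ w₂ := by
  obtain ⟨x₁, x₂, x₃, hx₁, hx₂, hx₃, r₁, r₂, r₃, hs⟩ := h
  refine ⟨x₁, x₃, x₂, hx₁, hx₃, hx₂, ?_, ?_, ?_, ?_⟩
  · convert r₂ using 2; ring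
  · convert r₁ using 2; ring
  · convert r₃ using 2; ring
  · convert hs using 2; ring

lemma HasGoodRounding.of_one_sub (h : HasGoodRounding t (1 - w₁) (1 - w₂) (1 - w₃)) :
    HasGoodRounding (-t) w₁ w₂ w₃ := by
  have one_sub_mem {x : ℝ} (hx : x = 0 ∨ x = 1) : 1 - x = 0 ∨ 1 - x = 1 := by
    rcases hx with rfl | rfl <;> norm_num
  obtain ⟨x₁, x₂, x₃, hx₁, hx₂, hx₃, r₁, r₂, r₃, hs⟩ := h
  refine ⟨1 - x₁, 1 - x₂, 1 - x₃, one_sub_mem hx₁, one_sub_mem hx₂, one_sub_mem hx₃, ?_, ?_, ?_, ?_⟩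
  · rw [← abs_neg]; convert r₁ using 2; ring
  · rw [← abs_neg]; convert r₂ using 2; ring
  · rw [← abs_neg]; convert r₃ using 2; ring
  · convert hs using 1; ring

/-- Round up the largest coordinate, the two largest, or all three, according to the mass of `w`. -/
lemma hasGoodRounding_half_of_antitone (hw₁ : w₁ ≤ 1) (hw₃ : 0 ≤ w₃) (h₁₂ : w₂ ≤ w₁)
    (h₂₃ : w₃ ≤ w₂) : HasGoodRounding (1 / 2) w₁ w₂ w₃ := by
  by_cases hs₁ : w₁ + w₂ + w₃ ≤ 1
  · refine ⟨1, 0, 0, by norm_num, by norm_num, by norm_num, ?_⟩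
    simp only [abs_le, mem_Icc]
    and_intros <;> linarith
  by_cases hs₂ : w₁ + w₂ + w₃ ≤ 2 ∧ 2 / 3 ≤ w₁ + w₂ - w₃
  · refine ⟨1, 1, 0, by norm_num, by norm_num, by norm_num, ?_⟩
    simp only [abs_le, mem_Icc]
    and_intros <;> linarith
  · rw [not_and_or, not_le, not_le] at hs₂
    refine ⟨1, 1, 1, by norm_num, by norm_num, by norm_num, ?_⟩
    simp only [abs_le, mem_Icc]
    rcases hs₂ with hs₂ | hs₂ <;> and_intros <;> linarith

lemma hasGoodRounding_half (hw₁ : w₁ ∈ Icc 0 1) (hw₂ : w₂ ∈ Icc 0 1) (hw₃ : w₃ ∈ Icc 0 1) :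
    HasGoodRounding (1 / 2) w₁ w₂ w₃ := by
  wlog h₁₂ : w₂ ≤ w₁ generalizing w₁ w₂ w₃
  · exact (this hw₂ hw₁ hw₃ (le_of_not_ge h₁₂)).swap₁₂
  wlog h₁₃ : w₃ ≤ w₁ generalizing w₁ w₂ w₃
  · exact (this hw₃ hw₁ hw₂ (le_of_not_ge h₁₃) (h₁₂.trans (le_of_not_ge h₁₃))).swap₁₂.swap₂₃
  wlog h₂₃ : w₃ ≤ w₂ generalizing w₁ w₂ w₃
  · exact (this hw₁ hw₃ hw₂ h₁₃ h₁₂ (le_of_not_ge h₂₃)).swap₂₃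
  exact hasGoodRounding_half_of_antitone hw₁.2 hw₃.1 h₁₂ h₂₃

lemma hasGoodRounding_of_mem_Icc (ht : t = 1 / 2 ∨ t = -(1 / 2)) (hw₁ : w₁ ∈ Icc 0 1)
    (hw₂ : w₂ ∈ Icc 0 1) (hw₃ : w₃ ∈ Icc 0 1) : HasGoodRounding t w₁ w₂ w₃ := by
  have one_sub_mem {w : ℝ} (hw : w ∈ Icc (0 : ℝ) 1) : 1 - w ∈ Icc (0 : ℝ) 1 :=
    ⟨by linarith [hw.2], by linarith [hw.1]⟩
  rcases ht with rfl | rfl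
  · exact hasGoodRounding_half hw₁ hw₂ hw₃
  · exact (hasGoodRounding_half (one_sub_mem hw₁) (one_sub_mem hw₂) (one_sub_mem hw₃)).of_one_sub

end Rounding

section SignArithmetic

variable {b₁ b₂ b₃ t₁ t₂ t₃ : ℝ}

/-- If the signs `bₖ tₖ` are not all equal, at most two of the terms `bₖ uₖ` share a sign. -/
lemma abs_clause_le_four {u₁ u₂ u₃ : ℝ} (hb₁ : b₁ = -1 ∨ b₁ = 1) (hb₂ : b₂ = -1 ∨ b₂ = 1)
    (hb₃ : b₃ = -1 ∨ b₃ = 1) (ht₁ : t₁ = 1 / 2 ∨ t₁ = -(1 / 2)) (ht₂ : t₂ = 1 / 2 ∨ t₂ = -(1 / 2))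
    (ht₃ : t₃ = 1 / 2 ∨ t₃ = -(1 / 2)) (hnae : |b₁ * t₁ + b₂ * t₂ + b₃ * t₃| ≤ 1 / 2)
    (hu₁ : t₁ * u₁ ∈ Icc (-1) 0) (hu₂ : t₂ * u₂ ∈ Icc (-1) 0) (hu₃ : t₃ * u₃ ∈ Icc (-1) 0) :
    |b₁ * u₁ + b₂ * u₂ + b₃ * u₃| ≤ 4 := by
  obtain ⟨hn, hn'⟩ := abs_le.1 hnae
  obtain ⟨hu₁, hu₁'⟩ := hu₁
  obtain ⟨hu₂, hu₂'⟩ := hu₂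
  obtain ⟨hu₃, hu₃'⟩ := hu₃
  rw [abs_le]
  rcases hb₁ with rfl | rfl <;> rcases hb₂ with rfl | rfl <;> rcases hb₃ with rfl | rfl <;>
    rcases ht₁ with rfl | rfl <;> rcases ht₂ with rfl | rfl <;> rcases ht₃ with rfl | rfl
  all_goals constructor <;> linarith

lemma three_halves_le_abs_of_half_lt (hb₁ : b₁ = -1 ∨ b₁ = 1) (hb₂ : b₂ = -1 ∨ b₂ = 1)
    (hb₃ : b₃ = -1 ∨ b₃ = 1) (ht₁ : t₁ = 1 / 2 ∨ t₁ = -(1 / 2)) (ht₂ : t₂ = 1 / 2 ∨ t₂ = -(1 / 2))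
    (ht₃ : t₃ = 1 / 2 ∨ t₃ = -(1 / 2)) (h : 1 / 2 < |b₁ * t₁ + b₂ * t₂ + b₃ * t₃|) :
    3 / 2 ≤ |b₁ * t₁ + b₂ * t₂ + b₃ * t₃| := by
  revert h
  rcases hb₁ with rfl | rfl <;> rcases hb₂ with rfl | rfl <;> rcases hb₃ with rfl | rfl <;>
    rcases ht₁ with rfl | rfl <;> rcases ht₂ with rfl | rfl <;> rcases ht₃ with rfl | rfl <;>
    norm_num

lemma three_halves_le_abs_gadget_of_not_all_eq (ht₁ : t₁ = 1 / 2 ∨ t₁ = -(1 / 2))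
    (ht₂ : t₂ = 1 / 2 ∨ t₂ = -(1 / 2)) (ht₃ : t₃ = 1 / 2 ∨ t₃ = -(1 / 2))
    (h : ¬(t₁ = t₂ ∧ t₁ = t₃)) :
    3 / 2 ≤ |t₁ + t₂ - t₃| ∨ 3 / 2 ≤ |t₁ - t₂ + t₃| ∨ 3 / 2 ≤ |-t₁ + t₂ + t₃| := by
  revert h
  rcases ht₁ with rfl | rfl <;> rcases ht₂ with rfl | rfl <;> rcases ht₃ with rfl | rfl <;>
    norm_num

end SignArithmetic

section Gadget

variable {m n : ℕ} (B : Matrix (Fin m) (Fin n) ℝ) (d : Fin n ⊕ Fin n ⊕ Fin n → ℝ)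

lemma Amat_mulVec_inl (j : Fin m) :
    (Amat B *ᵥ d) (inl j) =
      1 / 3 * (B *ᵥ fun i => d (inl i) + d (inr (inl i)) + d (inr (inr i))) j := by
  simp only [Amat, mulVec, dotProduct, of_apply, Fintype.sum_sum_type, elim_inl, elim_inr, id_eq,
    mul_add, Finset.sum_add_distrib, Finset.mul_sum, mul_assoc]
  ring

lemma Amat_mulVec_inr_inl (k : Fin n) :
    (Amat B *ᵥ d) (inr (inl k)) = d (inl k) + d (inr (inl k)) - d (inr (inr k)) := by
  simp [Amat, mulVec, dotProduct, Fintype.sum_sum_type, ite_mul]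
  ring

lemma Amat_mulVec_inr_inr_inl (k : Fin n) :
    (Amat B *ᵥ d) (inr (inr (inl k))) = d (inl k) - d (inr (inl k)) + d (inr (inr k)) := by
  simp [Amat, mulVec, dotProduct, Fintype.sum_sum_type, ite_mul]
  ring

lemma Amat_mulVec_inr_inr_inr (k : Fin n) :
    (Amat B *ᵥ d) (inr (inr (inr k))) = -d (inl k) + d (inr (inl k)) + d (inr (inr k)) := by
  simp [Amat, mulVec, dotProduct, Fintype.sum_sum_type, ite_mul]
  ring

end Gadget

lemma IsNAEClauseMatrix.exists_mulVec_eq {m n : ℕ} {B : Matrix (Fin m) (Fin n) ℝ}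
    (hB : IsNAEClauseMatrix B) :
    ∃ (i₁ i₂ i₃ : Fin m → Fin n) (b₁ b₂ b₃ : Fin m → ℝ),
      (∀ j, (b₁ j = -1 ∨ b₁ j = 1) ∧ (b₂ j = -1 ∨ b₂ j = 1) ∧ (b₃ j = -1 ∨ b₃ j = 1)) ∧
      ∀ v j, (B *ᵥ v) j = b₁ j * v (i₁ j) + b₂ j * v (i₂ j) + b₃ j * v (i₃ j) := by
  obtain ⟨i₁, i₂, i₃, b₁, b₂, b₃, hb, hB⟩ := hB
  refine ⟨i₁, i₂, i₃, b₁, b₂, b₃, hb, fun v j => ?_⟩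
  simp [mulVec, dotProduct, hB, add_mul, ite_mul, Finset.sum_add_distrib]

section Reduction

variable {m n : ℕ} {B : Matrix (Fin m) (Fin n) ℝ}

lemma exists_norm_Amat_mulVec_sub_le (hB : IsNAEClauseMatrix B) {ψ : Fin n → ℝ}
    (hψ : NAESatisfies B ψ) {w : Fin n ⊕ Fin n ⊕ Fin n → ℝ} (hw : ∀ c, w c ∈ Icc 0 1) :
    ∃ x : Fin n ⊕ Fin n ⊕ Fin n → ℝ, (∀ c, x c = 0 ∨ x c = 1) ∧ ‖Amat B *ᵥ (w - x)‖ ≤ 4 / 3 := by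
  obtain ⟨i₁, i₂, i₃, b₁, b₂, b₃, hb, hBv⟩ := hB.exists_mulVec_eq
  obtain ⟨hψ01, hψB⟩ := hψ
  set t : Fin n → ℝ := (fun _ => 1 / 2) - ψ
  have ht i : t i = 1 / 2 ∨ t i = -(1 / 2) := by
    rcases hψ01 i with h | h <;> norm_num [t, h]
  choose x₁ x₂ x₃ hx₁ hx₂ hx₃ hrow₁ hrow₂ hrow₃ hsum using fun i =>
    hasGoodRounding_of_mem_Icc (ht i) (hw (inl i)) (hw (inr (inl i))) (hw (inr (inr i)))
  refine ⟨Sum.elim x₁ (Sum.elim x₂ x₃), by rintro (i | i | i) <;> simp [*], ?_⟩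
  rw [pi_norm_le_iff_of_nonneg (by norm_num)]
  rintro (j | k | k | k) <;> rw [Real.norm_eq_abs]
  · have hnae : |(B *ᵥ t) j| ≤ 1 / 2 := by
      simpa only [Real.norm_eq_abs] using (norm_le_pi_norm _ j).trans hψB
    rw [Amat_mulVec_inl, hBv, abs_mul, abs_of_pos (by norm_num : (0 : ℝ) < 1 / 3)]
    rw [hBv] at hnae
    have := abs_clause_le_four (hb j).1 (hb j).2.1 (hb j).2.2 (ht _) (ht _) (ht _) hnae
      (hsum (i₁ j)) (hsum (i₂ j)) (hsum (i₃ j))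
    simp only [Pi.sub_apply, elim_inl, elim_inr] at this ⊢
    linarith
  · simpa [Amat_mulVec_inr_inl] using hrow₁ k
  · simpa [Amat_mulVec_inr_inr_inl] using hrow₂ k
  · simpa [Amat_mulVec_inr_inr_inr] using hrow₃ k

lemma three_halves_le_norm_Amat_mulVec (hB : IsNAEClauseMatrix B)
    (hunsat : ¬∃ ψ, NAESatisfies B ψ) {d : Fin n ⊕ Fin n ⊕ Fin n → ℝ}
    (hd : ∀ c, d c = 1 / 2 ∨ d c = -(1 / 2)) :
    3 / 2 ≤ ‖Amat B *ᵥ d‖ := by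
  have le_norm {r} (h : 3 / 2 ≤ |(Amat B *ᵥ d) r|) : 3 / 2 ≤ ‖Amat B *ᵥ d‖ :=
    h.trans ((Real.norm_eq_abs _).symm.trans_le (norm_le_pi_norm _ r))
  by_cases hconst : ∀ i, d (inl i) = d (inr (inl i)) ∧ d (inl i) = d (inr (inr i))
  · obtain ⟨i₁, i₂, i₃, b₁, b₂, b₃, hb, hBv⟩ := hB.exists_mulVec_eq
    set t : Fin n → ℝ := fun i => d (inl i)
    have hunsat_t : ¬‖B *ᵥ t‖ ≤ 1 / 2 := fun h => hunsat ⟨fun i => 1 / 2 - t i, fun i => by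
      rcases hd (inl i) with h | h <;> norm_num [t, h], by convert h; ext; simp⟩
    obtain ⟨j, hj⟩ : ∃ j, 1 / 2 < |(B *ᵥ t) j| := by
      by_contra! h
      exact hunsat_t ((pi_norm_le_iff_of_nonneg (by norm_num)).2 fun j => h j)
    refine le_norm (r := inl j) ?_
    rw [hBv] at hj
    convert three_halves_le_abs_of_half_lt (hb j).1 (hb j).2.1 (hb j).2.2
      (hd _) (hd _) (hd _) hj using 2
    rw [Amat_mulVec_inl, hBv]
    simp only [← (hconst _).1, ← (hconst _).2]
    ring
  · obtain ⟨i, hi⟩ := not_forall.1 hconst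
    rcases three_halves_le_abs_gadget_of_not_all_eq (hd (inl i)) (hd (inr (inl i)))
      (hd (inr (inr i))) hi with h | h | h
    · exact le_norm (r := inr (inl i)) (by rwa [Amat_mulVec_inr_inl])
    · exact le_norm (r := inr (inr (inl i))) (by rwa [Amat_mulVec_inr_inr_inl])
    · exact le_norm (r := inr (inr (inr i))) (by rwa [Amat_mulVec_inr_inr_inr])

end Reduction

/-- The NP-hardness gap: `lindisc(A) ≤ 4/3` when `B` is NAE-satisfiable, and
`lindisc(A) ≥ 3/2` when it is not. -/
theorem reduction_gap {m n : ℕ} (B : Matrix (Fin m) (Fin n) ℝ)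
    (hB : IsNAEClauseMatrix B) :
    ((∃ ψ : Fin n → ℝ, NAESatisfies B ψ) → lindisc (Amat B) ≤ 4 / 3) ∧
    ((¬ ∃ ψ : Fin n → ℝ, NAESatisfies B ψ) → 3 / 2 ≤ lindisc (Amat B)) := by
  refine ⟨fun ⟨ψ, hψ⟩ => lindisc_le_of_forall_exists fun w hw =>
    exists_norm_Amat_mulVec_sub_le hB hψ hw, fun hunsat => ?_⟩
  refine le_lindisc_of_forall_le (w := fun _ => 1 / 2) (fun _ => ⟨by norm_num, by norm_num⟩)
    fun x hx => three_halves_le_norm_Amat_mulVec hB hunsat fun c => ?_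
  rcases hx c with h | h <;> norm_num [h]
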